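/- (Halving claim) For every connected component C of G and every k ≥ 0, if the number n_k of distinct values taken by R_k on C satisfies n_k ≥ 2, then the number of distinct values taken by R_{k+2} on C is at most n_k / 2; that is, 2 · card(R_{k+2} '' C) ≤ card(R_k '' C). In words, every two iterations the number of current sub-components inside each connected component is at least halved. -/

import Mathlib

/-!
Every `R_k` is a root map: `R_k v ≤ v`, `R_k` is idempotent and `R_k v` is reachable from `v`
(for `k + 1` because `card V` rounds of the deflationary update `T` reach a fixed point). Since
`T_R v` depends only on `R v`, the map `R_{k+2}` factors through `R_k`, so it sends the roots of
`R_k` in a component `C` onto the roots of `R_{k+2}` in `C`, and it suffices to show that every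
fibre has at least two elements.

Let `u` be a root of `R_{k+2}`; it is a root of `R_k` too. If in round `k + 1` some vertex from
another `R_k`-class gets label `u`, its `R_k`-root is the second point of the fibre. Otherwise the
`R_k`-class of `u` is also its `R_{k+1}`-class. As `C` contains a second class, some edge `a b`
leaves this class, and round `k + 1` gives `R_{k+1} b < u`. Round `k + 2` then gives `u` a label
below `u`, which is impossible.
-/

open scoped Classical in
/-- The component-minimum map: `rho G v` is the least element of the
connected component of `v`. -/
noncomputable def rho {V : Type*} [Fintype V] [LinearOrder V] (G : SimpleGraph V) (v : V) : V :=
  (Finset.univ.filter fun w => G.Reachable w v).min'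
    ⟨v, Finset.mem_filter.mpr ⟨Finset.mem_univ v, SimpleGraph.Reachable.refl v⟩⟩

open scoped Classical in
/-- The update map `T_R`: `upd G R v` is the minimum of the finite nonempty set
`{R v} ∪ {R b : ∃ a, a adjacent to b and R a = R v}`. -/
noncomputable def upd {V : Type*} [Fintype V] [LinearOrder V] (G : SimpleGraph V)
    (R : V → V) (v : V) : V :=
  (insert (R v) ((Finset.univ.filter fun b => ∃ a, G.Adj a b ∧ R a = R v).image R)).min'
    (Finset.insert_nonempty _ _)

/-- The algorithm's iteration: `R_0 = id`, `R_{k+1} = (T_{R_k})^[card V]`. -/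
noncomputable def Rseq {V : Type*} [Fintype V] [LinearOrder V] (G : SimpleGraph V) :
    ℕ → V → V
  | 0 => id
  | k + 1 => (upd G (Rseq G k))^[Fintype.card V]


theorem Function.map_iterate_card_eq_of_le_id {α : Type*} [Fintype α] [PartialOrder α]
    {f : α → α} (hf : f ≤ id) (x : α) :
    f (f^[Fintype.card α] x) = f^[Fintype.card α] x := by
  set N := Fintype.card α
  obtain ⟨i, hi, j, hj, hij, heq⟩ := Finset.exists_ne_map_eq_of_card_lt_of_maps_to
    (s := Finset.range (N + 1)) (t := Finset.univ) (f := fun i => f^[i] x)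
    (by simp [N]) (fun _ _ => Finset.mem_coe.2 (Finset.mem_univ _))
  wlog hlt : i < j generalizing i j
  · exact this j hj i hi hij.symm heq.symm (by omega)
  -- the orbit is antitone, so it is already constant from step `i` on
  have hfix : f (f^[i] x) = f^[i] x := by
    refine le_antisymm (hf _) ?_
    rw [← Function.iterate_succ_apply' f i x]
    exact heq ▸ Function.antitone_iterate_of_le_id hf hlt x
  rw [Finset.mem_range] at hi
  rw [← Nat.sub_add_cancel (Nat.le_of_lt_succ hi), Function.iterate_add_apply,
    Function.iterate_fixed hfix, hfix]

section Rseq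

open Finset

variable {V : Type*} [Fintype V] [LinearOrder V] {G : SimpleGraph V}

structure IsRootMap (G : SimpleGraph V) (R : V → V) : Prop where
  le : ∀ v, R v ≤ v
  idem : ∀ v, R (R v) = R v
  reachable : ∀ v, G.Reachable (R v) v

lemma upd_le (R : V → V) (v : V) : upd G R v ≤ R v :=
  min'_le _ _ (mem_insert_self _ _)

lemma upd_le_of_adj {R : V → V} {a b v : V} (hab : G.Adj a b) (ha : R a = R v) :
    upd G R v ≤ R b := by
  refine min'_le _ _ (mem_insert_of_mem (mem_image.2 ⟨b, ?_, rfl⟩))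
  simpa using ⟨a, hab, ha⟩

lemma upd_eq_or_exists_adj (R : V → V) (v : V) :
    upd G R v = R v ∨ ∃ a b, G.Adj a b ∧ R a = R v ∧ upd G R v = R b := by
  have hmem : upd G R v ∈ _ := min'_mem _ _
  simp only [mem_insert, mem_image, mem_filter, mem_univ, true_and] at hmem
  rcases hmem with hmem | ⟨b, ⟨a, hab, ha⟩, hb⟩
  · exact Or.inl hmem
  · exact Or.inr ⟨a, b, hab, ha, hb.symm⟩

lemma upd_congr {R : V → V} {v w : V} (h : R v = R w) : upd G R v = upd G R w := by
  unfold upd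
  congr 3
  ext b
  simp only [mem_filter, h]

namespace IsRootMap

variable {R : V → V} (hR : IsRootMap G R)
include hR

lemma upd_le_id : upd G R ≤ id := fun v => (upd_le R v).trans (hR.le v)

lemma reachable_upd (v : V) : G.Reachable (upd G R v) v := by
  rcases upd_eq_or_exists_adj (G := G) R v with h | ⟨a, b, hab, ha, h⟩
  · exact h ▸ hR.reachable v
  · rw [h]
    exact (hR.reachable b).trans (hab.symm.reachable.trans
      ((hR.reachable a).symm.trans (ha ▸ hR.reachable v)))

lemma reachable_iterate_upd (n : ℕ) (v : V) : G.Reachable ((upd G R)^[n] v) v := by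
  induction n with
  | zero => rfl
  | succ n ih =>
    rw [Function.iterate_succ_apply']
    exact (hR.reachable_upd _).trans ih

lemma iterate_card_upd : IsRootMap G (upd G R)^[Fintype.card V] where
  le := Function.iterate_le_id_of_le_id hR.upd_le_id _
  idem v := Function.iterate_fixed (Function.map_iterate_card_eq_of_le_id hR.upd_le_id v) _
  reachable := hR.reachable_iterate_upd _

end IsRootMap

lemma isRootMap_Rseq (G : SimpleGraph V) : ∀ k, IsRootMap G (Rseq G k)
  | 0 => ⟨fun _ => le_rfl, fun _ => rfl, fun _ => .rfl⟩
  | k + 1 => (isRootMap_Rseq G k).iterate_card_upd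

variable [Nonempty V]

lemma Rseq_succ_eq_iterate_upd (k : ℕ) (v : V) :
    Rseq G (k + 1) v = (upd G (Rseq G k))^[Fintype.card V - 1] (upd G (Rseq G k) v) := by
  rw [← Function.iterate_succ_apply, Nat.succ_eq_add_one,
    Nat.sub_add_cancel Fintype.card_pos]
  rfl

lemma Rseq_succ_le_upd (k : ℕ) (v : V) : Rseq G (k + 1) v ≤ upd G (Rseq G k) v := by
  rw [Rseq_succ_eq_iterate_upd]
  exact Function.iterate_le_id_of_le_id (isRootMap_Rseq G k).upd_le_id _ _

lemma Rseq_succ_le (k : ℕ) (v : V) : Rseq G (k + 1) v ≤ Rseq G k v :=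
  (Rseq_succ_le_upd k v).trans (upd_le _ v)

lemma Rseq_succ_le_of_adj {k : ℕ} {a b v : V} (hab : G.Adj a b)
    (ha : Rseq G k a = Rseq G k v) : Rseq G (k + 1) v ≤ Rseq G k b :=
  (Rseq_succ_le_upd k v).trans (upd_le_of_adj hab ha)

lemma Rseq_succ_congr {k : ℕ} {v w : V} (h : Rseq G k v = Rseq G k w) :
    Rseq G (k + 1) v = Rseq G (k + 1) w := by
  rw [Rseq_succ_eq_iterate_upd, Rseq_succ_eq_iterate_upd, upd_congr h]

lemma Rseq_succ_Rseq (k : ℕ) (v : V) : Rseq G (k + 1) (Rseq G k v) = Rseq G (k + 1) v :=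
  Rseq_succ_congr ((isRootMap_Rseq G k).idem v)

lemma Rseq_add_two_Rseq (k : ℕ) (v : V) : Rseq G (k + 2) (Rseq G k v) = Rseq G (k + 2) v :=
  Rseq_succ_congr (Rseq_succ_Rseq k v)

lemma Rseq_eq_self_of_succ {k : ℕ} {v : V} (h : Rseq G (k + 1) v = v) : Rseq G k v = v :=
  le_antisymm ((isRootMap_Rseq G k).le v) (h.symm.trans_le (Rseq_succ_le k v))

lemma exists_Rseq_add_two_eq_of_Rseq_ne {k : ℕ} {u w : V} (hu : Rseq G (k + 2) u = u)
    (hw : G.Reachable w u) (hne : Rseq G k w ≠ u) :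
    ∃ w', G.Reachable w' u ∧ Rseq G k w' ≠ u ∧ Rseq G (k + 2) w' = u := by
  by_cases h : ∃ w', Rseq G (k + 1) w' = u ∧ Rseq G k w' ≠ u
  · obtain ⟨w', hw'u, hw'⟩ := h
    refine ⟨w', hw'u ▸ ((isRootMap_Rseq G (k + 1)).reachable w').symm, hw', ?_⟩
    rw [← Rseq_succ_Rseq, hw'u, hu]
  · push Not at h
    exfalso
    have hu0 : Rseq G k u = u := Rseq_eq_self_of_succ (Rseq_eq_self_of_succ hu)
    -- the `R_k`-class of `u` is now its `R_{k+1}`-class; an edge `a b` leaving it has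
    -- `R_{k+1} b < u`, and round `k + 2` passes this label on to `u`
    obtain ⟨⟨⟨a, b⟩, hab⟩, -, ha, hb⟩ :=
      hw.symm.some.exists_boundary_dart {x | Rseq G k x = u} hu0 hne
    have hb1 : Rseq G (k + 1) b < u :=
      ((Rseq_succ_le_of_adj hab.symm rfl).trans_eq ha).lt_of_ne fun h' => hb (h b h')
    have hu2 : Rseq G (k + 2) u ≤ Rseq G (k + 1) b :=
      Rseq_succ_le_of_adj hab (Rseq_succ_congr (ha.trans hu0.symm))
    exact (hu2.trans_lt hb1).ne hu

open scoped Classical in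
lemma two_le_card_fiber_Rseq_add_two {k : ℕ} {v x : V}
    (h : 2 ≤ ((univ.filter fun u => G.Reachable u v).image (Rseq G k)).card)
    (hx : G.Reachable x v) :
    2 ≤ (((univ.filter fun u => G.Reachable u v).image (Rseq G k)).filter
      fun r => Rseq G (k + 2) r = Rseq G (k + 2) x).card := by
  set u := Rseq G (k + 2) x
  have hu : Rseq G (k + 2) u = u := (isRootMap_Rseq G (k + 2)).idem x
  have huv : G.Reachable u v := ((isRootMap_Rseq G (k + 2)).reachable x).trans hx
  have hmem : ∀ y, G.Reachable y u → Rseq G (k + 2) y = u →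
      Rseq G k y ∈ ((univ.filter fun u => G.Reachable u v).image (Rseq G k)).filter
        fun r => Rseq G (k + 2) r = u := fun y hyu hy =>
    mem_filter.2 ⟨mem_image_of_mem _ (mem_filter.2 ⟨mem_univ y, hyu.trans huv⟩),
      (Rseq_add_two_Rseq k y).trans hy⟩
  obtain ⟨_, hr, hne⟩ := exists_mem_ne h u
  obtain ⟨w, hw, rfl⟩ := mem_image.1 hr
  obtain ⟨w', hw'u, hw'ne, hw'⟩ :=
    exists_Rseq_add_two_eq_of_Rseq_ne hu ((mem_filter.1 hw).2.trans huv.symm) hne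
  have huS := hmem u .rfl hu
  rw [Rseq_eq_self_of_succ (Rseq_eq_self_of_succ hu)] at huS
  exact one_lt_card.2 ⟨u, huS, _, hmem w' hw'u hw', hw'ne.symm⟩

end Rseq

open scoped Classical in
theorem stmt5 {V : Type*} [Fintype V] [Nonempty V] [LinearOrder V] (G : SimpleGraph V)
    (v : V) (k : ℕ)
    (h : 2 ≤ (((Finset.univ.filter fun u => G.Reachable u v)).image (Rseq G k)).card) :
    2 * (((Finset.univ.filter fun u => G.Reachable u v)).image (Rseq G (k + 2))).card ≤
      (((Finset.univ.filter fun u => G.Reachable u v)).image (Rseq G k)).card := by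
  set C := Finset.univ.filter fun u => G.Reachable u v
  have hfactor : (C.image (Rseq G k)).image (Rseq G (k + 2)) = C.image (Rseq G (k + 2)) := by
    simp only [Finset.image_image, Function.comp_def, Rseq_add_two_Rseq]
  rw [← hfactor]
  refine Finset.mul_card_image_le_card _ 2 fun u hu => ?_
  obtain ⟨x, hx, rfl⟩ := Finset.mem_image.1 (hfactor ▸ hu)
  exact two_le_card_fiber_Rseq_add_two h (Finset.mem_filter.1 hx).2
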